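/- If X is a normal n×n complex matrix and [[A, X],[X*, B]] is positive semidefinite, then Tr(X*X) ≤ Tr(AB). -/

import Mathlib

open scoped Matrix ComplexOrder

noncomputable section

/-- The numerical range of a matrix. -/
def numRange {m : Type*} [Fintype m] (X : Matrix m m ℂ) : Set ℂ :=
  {z | ∃ v : m → ℂ, star v ⬝ᵥ v = 1 ∧ z = star v ⬝ᵥ X.mulVec v}

/-- The inradius of a subset of the plane: the radius of the largest disc it contains. -/
def inRad (S : Set ℂ) : ℝ := sSup {r : ℝ | ∃ c : ℂ, Metric.closedBall c r ⊆ S}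

/-- The indiameter: the diameter of the largest disc contained in the set. -/
def inDiam (S : Set ℂ) : ℝ := 2 * inRad S

/-- The numerical range of the compression of `X` to the subspace `S`. -/
def nrOn {m : Type*} [Fintype m] (X : Matrix m m ℂ) (S : Submodule ℂ (m → ℂ)) : Set ℂ :=
  {z | ∃ v ∈ S, star v ⬝ᵥ v = 1 ∧ z = star v ⬝ᵥ X.mulVec v}

/-- The elliptical width `δ₂(X)`: the supremum of the indiameters of the numerical
ranges of compressions of `X` to two-dimensional subspaces. -/
def ellWidth {m : Type*} [Fintype m] (X : Matrix m m ℂ) : ℝ :=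
  sSup {d | ∃ S : Submodule ℂ (m → ℂ), Module.finrank ℂ S = 2 ∧ d = inDiam (nrOn X S)}

/-- The operator (spectral) norm of a matrix. -/
def opNorm {m : Type*} [Fintype m] [DecidableEq m] (M : Matrix m m ℂ) : ℝ :=
  ‖Matrix.toEuclideanCLM (𝕜 := ℂ) M‖

/-- The Frobenius (Hilbert–Schmidt) norm of a matrix. -/
def frobNorm {m : Type*} [Fintype m] (M : Matrix m m ℂ) : ℝ :=
  Real.sqrt ((Matrix.trace (Mᴴ * M)).re)

/-- Eigenvalues of a Hermitian matrix in decreasing order (junk value `0` otherwise):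
`eigDesc M k` is the `(k+1)`-th largest eigenvalue of `M`. -/
def eigDesc {m : ℕ} (M : Matrix (Fin m) (Fin m) ℂ) (k : Fin m) : ℝ :=
  if h : M.IsHermitian then (h.eigenvalues ∘ Tuple.sort h.eigenvalues) k.rev else 0

/-- The absolute value `|X| = (XᴴX)^(1/2)` of a matrix. -/
def matAbs {m : Type*} [Fintype m] [DecidableEq m] (X : Matrix m m ℂ) : Matrix m m ℂ :=
  (Matrix.posSemidef_conjTranspose_mul_self X).1.eigenvectorUnitary.1 *
    Matrix.diagonal ((↑) ∘ (√·) ∘ (Matrix.posSemidef_conjTranspose_mul_self X).1.eigenvalues) *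
    (star (Matrix.posSemidef_conjTranspose_mul_self X).1.eigenvectorUnitary : Matrix m m ℂ)

/-- The `2n × 2n` block matrix `[[A, X],[Xᴴ, B]]`, reindexed by `Fin (n+n)`. -/
def blockR {n : ℕ} (A X B : Matrix (Fin n) (Fin n) ℂ) :
    Matrix (Fin (n + n)) (Fin (n + n)) ℂ :=
  (Matrix.fromBlocks A X Xᴴ B).submatrix finSumFinEquiv.symm finSumFinEquiv.symm

/-- The operator norm distance from `X` to the scalar matrices. -/
def distScalar {m : Type*} [Fintype m] [DecidableEq m] (X : Matrix m m ℂ) : ℝ :=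
  ⨅ a : ℂ, opNorm (X - a • 1)

/-- Apply a real function to a Hermitian matrix by the functional calculus
(junk value `0` if the matrix is not Hermitian). -/
def hermApply {m : Type*} [Fintype m] [DecidableEq m] (f : ℝ → ℝ) (M : Matrix m m ℂ) :
    Matrix m m ℂ :=
  if h : M.IsHermitian then h.cfc f else 0

end

/-!
After perturbing `A` to be positive definite, the Schur complement gives `Xᴴ A⁻¹ X ≤ B`, hence
`Tr(AB) ≥ Tr(A Xᴴ A⁻¹ X)`. Diagonalising `A = U D Uᴴ` and putting `Y = Uᴴ X U`, which is still
normal, `Tr(A Xᴴ A⁻¹ X) = ∑ᵢⱼ aᵢⱼ dᵢ / dⱼ` with `aᵢⱼ = |Yⱼᵢ|²`, while `Tr(XᴴX) = ∑ᵢⱼ aᵢⱼ`.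
Normality of `Y` says that `a` has equal row and column sums, and for such a nonnegative matrix
`∑ aᵢⱼ tᵢ / tⱼ ≥ ∑ aᵢⱼ` for every positive `t`: by `log x ≤ x - 1` the difference is at least
`∑ aᵢⱼ (log tᵢ - log tⱼ) = 0`.
-/

open Finset in
theorem sum_sum_le_sum_sum_mul_div {ι : Type*} [Fintype ι] {a : ι → ι → ℝ}
    (ha : ∀ i j, 0 ≤ a i j) (hsum : ∀ i, ∑ j, a i j = ∑ j, a j i) {t : ι → ℝ}
    (ht : ∀ i, 0 < t i) :
    ∑ i, ∑ j, a i j ≤ ∑ i, ∑ j, a i j * (t i / t j) := by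
  have hlog : ∑ i, ∑ j, a i j * (Real.log (t i) - Real.log (t j)) = 0 := by
    simp only [mul_sub, sum_sub_distrib, ← sum_mul]
    rw [sum_comm (f := fun i j => a i j * Real.log (t j))]
    simp only [← sum_mul, hsum, sub_self]
  have hterm : ∀ i j,
      a i j * (Real.log (t i) - Real.log (t j)) ≤ a i j * (t i / t j) - a i j := by
    intro i j
    rw [← Real.log_div (ht i).ne' (ht j).ne', ← mul_sub_one]
    exact mul_le_mul_of_nonneg_left (Real.log_le_sub_one_of_pos (div_pos (ht i) (ht j))) (ha i j)
  have := sum_le_sum (s := univ) fun i _ => sum_le_sum (s := univ) fun j _ => hterm i j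
  rw [hlog] at this
  simpa only [sum_sub_distrib, sub_nonneg] using this

namespace Matrix

open Filter Topology

variable {𝕜 n : Type*} [RCLike 𝕜] [Fintype n]

theorem sum_norm_sq_col_eq_sum_norm_sq_row {Y : Matrix n n 𝕜} (hY : IsStarNormal Y) (i : n) :
    ∑ j, ‖Y j i‖ ^ 2 = ∑ j, ‖Y i j‖ ^ 2 := by
  have h := congr_fun (congr_fun hY.star_comm_self i) i
  simp only [star_eq_conjTranspose, mul_apply, conjTranspose_apply, RCLike.star_def,
    RCLike.conj_mul, RCLike.mul_conj] at h
  exact_mod_cast h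

theorem re_trace_conjTranspose_mul_self_le_of_diagonal [DecidableEq n] {Y : Matrix n n 𝕜}
    (hY : IsStarNormal Y) {d : n → ℝ} (hd : ∀ i, 0 < d i) :
    RCLike.re (Yᴴ * Y).trace ≤ RCLike.re
      (diagonal (fun i => (d i : 𝕜)) * Yᴴ * diagonal (fun i => ((d i)⁻¹ : 𝕜)) * Y).trace := by
  have hl : RCLike.re (Yᴴ * Y).trace = ∑ i, ∑ j, ‖Y j i‖ ^ 2 := by
    simp [trace, mul_apply, RCLike.conj_mul]
  have hr : RCLike.re
      (diagonal (fun i => (d i : 𝕜)) * Yᴴ * diagonal (fun i => ((d i)⁻¹ : 𝕜)) * Y).trace =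
        ∑ i, ∑ j, ‖Y j i‖ ^ 2 * (d i / d j) := by
    rw [← RCLike.ofReal_re (K := 𝕜) (∑ i, _)]
    congr 1
    simp only [trace, diag_apply, Matrix.mul_assoc, diagonal_mul]
    simp only [mul_apply, conjTranspose_apply, RCLike.star_def, diagonal_apply,
      ite_mul, zero_mul, Finset.sum_ite_eq, Finset.mem_univ, if_true, Finset.mul_sum]
    push_cast
    refine Finset.sum_congr rfl fun i _ => Finset.sum_congr rfl fun j _ => ?_
    rw [← RCLike.conj_mul]
    ring
  rw [hl, hr]
  exact sum_sum_le_sum_sum_mul_div (fun _ _ => by positivity)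
    (sum_norm_sq_col_eq_sum_norm_sq_row hY) hd

theorem trace_conjStarAlgAut [DecidableEq n] (U : unitary (Matrix n n 𝕜)) (M : Matrix n n 𝕜) :
    (Unitary.conjStarAlgAut 𝕜 _ U M).trace = M.trace := by
  rw [Unitary.conjStarAlgAut_apply, trace_mul_cycle, Unitary.coe_star_mul_self, Matrix.one_mul]

theorem PosDef.re_trace_conjTranspose_mul_self_le [DecidableEq n] {A X : Matrix n n 𝕜}
    (hA : A.PosDef) (hX : IsStarNormal X) :
    RCLike.re (Xᴴ * X).trace ≤ RCLike.re (A * Xᴴ * A⁻¹ * X).trace := by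
  obtain ⟨U, d, hd, rfl⟩ : ∃ (U : unitary (Matrix n n 𝕜)) (d : n → ℝ), (∀ i, 0 < d i) ∧
      A = Unitary.conjStarAlgAut 𝕜 _ U (diagonal fun i => (d i : 𝕜)) :=
    ⟨_, _, hA.eigenvalues_pos, hA.1.spectral_theorem⟩
  set ψ := Unitary.conjStarAlgAut 𝕜 _ U
  have hinv : (ψ (diagonal fun i => (d i : 𝕜)))⁻¹ = ψ (diagonal fun i => ((d i)⁻¹ : 𝕜)) := by
    refine inv_eq_left_inv ?_
    rw [← map_mul, diagonal_mul_diagonal]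
    simp [(hd _).ne']
  obtain ⟨Y, rfl⟩ : ∃ Y, X = ψ Y := ⟨ψ.symm X, (ψ.apply_symm_apply X).symm⟩
  have hY : IsStarNormal Y := by simpa using hX.map ψ.symm
  rw [hinv, ← star_eq_conjTranspose, ← map_star, ← map_mul, ← map_mul, ← map_mul, ← map_mul,
    trace_conjStarAlgAut, trace_conjStarAlgAut, star_eq_conjTranspose]
  exact re_trace_conjTranspose_mul_self_le_of_diagonal hY hd

open scoped MatrixOrder in
theorem PosSemidef.trace_mul_nonneg {A B : Matrix n n 𝕜} (hA : A.PosSemidef)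
    (hB : B.PosSemidef) : 0 ≤ (A * B).trace := by
  classical
  have hS : (CFC.sqrt A).IsHermitian := (nonneg_iff_posSemidef.mp (CFC.sqrt_nonneg A)).1
  calc 0 ≤ (CFC.sqrt A * B * CFC.sqrt A).trace := by
        simpa only [hS.eq] using (hB.conjTranspose_mul_mul_same (CFC.sqrt A)).trace_nonneg
    _ = (A * B).trace := by rw [trace_mul_cycle, CFC.sqrt_mul_sqrt_self A hA.nonneg]

theorem re_trace_conjTranspose_mul_self_le_of_fromBlocks_of_posDef [DecidableEq n]
    {A B X : Matrix n n 𝕜} (hA : A.PosDef) (hP : (fromBlocks A X Xᴴ B).PosSemidef)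
    (hX : IsStarNormal X) :
    RCLike.re (Xᴴ * X).trace ≤ RCLike.re (A * B).trace := by
  have := hA.isUnit.invertible
  have hC : 0 ≤ RCLike.re (A * (B - Xᴴ * A⁻¹ * X)).trace :=
    (RCLike.nonneg_iff.mp (hA.posSemidef.trace_mul_nonneg ((hA.fromBlocks₁₁ X B).mp hP))).1
  rw [Matrix.mul_sub, trace_sub, map_sub, sub_nonneg] at hC
  calc RCLike.re (Xᴴ * X).trace ≤ RCLike.re (A * Xᴴ * A⁻¹ * X).trace :=
        hA.re_trace_conjTranspose_mul_self_le hX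
    _ ≤ RCLike.re (A * B).trace := by simpa only [Matrix.mul_assoc] using hC

theorem re_trace_conjTranspose_mul_self_le_of_fromBlocks_add [DecidableEq n]
    {A B X : Matrix n n 𝕜} (hP : (fromBlocks A X Xᴴ B).PosSemidef) (hX : IsStarNormal X)
    {ε : ℝ} (hε : 0 < ε) :
    RCLike.re (Xᴴ * X).trace ≤ RCLike.re (A * B).trace + ε * RCLike.re B.trace := by
  have hA : A.PosSemidef := hP.submatrix Sum.inl
  have hε1 : (fromBlocks (ε • 1 : Matrix n n 𝕜) 0 0 (0 : Matrix n n 𝕜)).PosSemidef := by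
    nth_rw 3 [← diagonal_zero]
    rw [← diagonal_one, ← diagonal_smul, fromBlocks_diagonal]
    exact PosSemidef.diagonal
      (Sum.forall.mpr ⟨fun _ => smul_nonneg hε.le zero_le_one, fun _ => le_rfl⟩)
  have hPε : (fromBlocks (A + ε • 1) X Xᴴ B).PosSemidef := by
    simpa [fromBlocks_add] using hP.add hε1
  have := re_trace_conjTranspose_mul_self_le_of_fromBlocks_of_posDef
    (PosDef.posSemidef_add hA (PosDef.one.smul hε)) hPε hX
  simpa [Matrix.add_mul, trace_add, RCLike.smul_re] using this

theorem re_trace_conjTranspose_mul_self_le_of_fromBlocks {A B X : Matrix n n 𝕜}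
    (hP : (fromBlocks A X Xᴴ B).PosSemidef) (hX : IsStarNormal X) :
    RCLike.re (Xᴴ * X).trace ≤ RCLike.re (A * B).trace := by
  classical
  have hlim : Tendsto (fun ε : ℝ => RCLike.re (A * B).trace + ε * RCLike.re B.trace)
      (𝓝[>] 0) (𝓝 (RCLike.re (A * B).trace)) :=
    ((continuous_const.add (continuous_id.mul continuous_const)).tendsto' 0 _
      (by simp)).mono_left nhdsWithin_le_nhds
  exact ge_of_tendsto hlim (eventually_nhdsWithin_of_forall fun _ hε =>
    re_trace_conjTranspose_mul_self_le_of_fromBlocks_add hP hX hε)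

end Matrix

/-- If `X` is normal and `[[A,X],[Xᴴ,B]]` is positive semidefinite, then
`Tr(XᴴX) ≤ Tr(AB)`. -/
theorem stmt11 {n : ℕ} (A B X : Matrix (Fin n) (Fin n) ℂ)
    (hP : (Matrix.fromBlocks A X Xᴴ B).PosSemidef)
    (hX : X * Xᴴ = Xᴴ * X) :
    (Matrix.trace (Xᴴ * X)).re ≤ (Matrix.trace (A * B)).re :=
  Matrix.re_trace_conjTranspose_mul_self_le_of_fromBlocks hP ⟨hX.symm⟩
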